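/- If (n, m, k, ℓ) are positive integers satisfying F^(k)_n · F^(k)_m = P_ℓ with k ≥ 3, n > m ≥ 3 and n ≥ k + 2, then 2(n + m)/5 < ℓ < 9(n + m)/10. -/
import Mathlib

/-- The Pell sequence: `P 0 = 0`, `P 1 = 1`, `P (ℓ+2) = 2 P (ℓ+1) + P ℓ`. -/
def pell : ℕ → ℤ
  | 0 => 0
  | 1 => 1
  | n + 2 => 2 * pell (n + 1) + pell n

/-- `kfib k j` is the `k`-generalized Fibonacci number `F⁽ᵏ⁾_n` with shifted index
`j = n + k - 2` (so `j = 0` corresponds to `n = 2 - k`).  Thus `kfib k j = 0` for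
`0 ≤ j ≤ k - 2` (these are `F⁽ᵏ⁾_{2-k} = ⋯ = F⁽ᵏ⁾_0 = 0`), `kfib k (k - 1) = 1`
(this is `F⁽ᵏ⁾_1 = 1`), and every later term is the sum of the preceding `k` terms
(junk value `0` if `k < 2`). -/
def kfib (k : ℕ) : ℕ → ℤ
  | j =>
    if k < 2 then 0
    else if j < k - 1 then 0
    else if j = k - 1 then 1
    else ∑ i ∈ Finset.range k, kfib k (j - 1 - i)
decreasing_by omega

lemma kfib_zero (k j : ℕ) (hk : 2 ≤ k) (h : j + 1 < k) : kfib k j = 0 := by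
  rw [kfib, if_neg (by omega), if_pos (by omega)]

lemma kfib_one {k : ℕ} (hk : 2 ≤ k) : kfib k (k-1) = 1 := by
  rw [kfib, if_neg (by omega), if_neg (by omega), if_pos rfl]

lemma kfib_rec {k j : ℕ} (hk : 2 ≤ k) (h : k ≤ j) :
    kfib k j = ∑ i ∈ Finset.range k, kfib k (j - 1 - i) := by
  rw [kfib, if_neg (by omega), if_neg (by omega), if_neg (by omega)]

lemma kfib_nonneg (k : ℕ) : ∀ j, 0 ≤ kfib k j := by
  intro j
  induction j using Nat.strong_induction_on with
  | _ j ih =>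
    rw [kfib]
    split_ifs with h1 h2 h3
    · rfl
    · rfl
    · norm_num
    · exact Finset.sum_nonneg fun i _ => ih _ (by omega)

lemma kfib_step {k j : ℕ} (hk : 2 ≤ k) (hj : k ≤ j) :
    kfib k (j+1) + kfib k (j-k) = 2 * kfib k j := by
  obtain ⟨K, rfl⟩ : ∃ K, k = K + 1 := ⟨k - 1, by omega⟩
  have e2 : ∑ i ∈ Finset.range K, kfib (K+1) (j - (i+1))
      = ∑ i ∈ Finset.range K, kfib (K+1) (j - 1 - i) :=
    Finset.sum_congr rfl fun i _ => by congr 1; omega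
  have eL : kfib (K+1) (j+1)
      = (∑ i ∈ Finset.range K, kfib (K+1) (j - 1 - i)) + kfib (K+1) j := by
    rw [kfib_rec hk (by omega)]
    rw [show (∑ i ∈ Finset.range (K+1), kfib (K+1) (j + 1 - 1 - i))
        = ∑ i ∈ Finset.range (K+1), kfib (K+1) (j - i) from
      Finset.sum_congr rfl fun i _ => by congr 1]
    rw [Finset.sum_range_succ' (fun i => kfib (K+1) (j - i)) K, e2, Nat.sub_zero]
  have eR : kfib (K+1) j
      = (∑ i ∈ Finset.range K, kfib (K+1) (j - 1 - i)) + kfib (K+1) (j - (K+1)) := by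
    conv_lhs => rw [kfib_rec hk hj]
    rw [Finset.sum_range_succ, show j - 1 - K = j - (K+1) by omega]
  rw [eL, eR]
  ring

lemma kfib_k {k : ℕ} (hk : 2 ≤ k) : kfib k k = 1 := by
  obtain ⟨K, rfl⟩ : ∃ K, k = K + 1 := ⟨k - 1, by omega⟩
  rw [kfib_rec hk le_rfl, Finset.sum_range_succ' (fun i => kfib (K+1) (K + 1 - 1 - i)) K]
  have e0 : K + 1 - 1 - 0 = (K+1) - 1 := by omega
  rw [e0, kfib_one hk]
  have hz : ∀ i ∈ Finset.range K, kfib (K+1) (K + 1 - 1 - (i+1)) = 0 := by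
    intro i hi
    exact kfib_zero _ _ hk (by simp only [Finset.mem_range] at hi; omega)
  rw [Finset.sum_congr rfl hz, Finset.sum_const_zero, zero_add]

lemma kfib_k1 {k : ℕ} (hk : 3 ≤ k) : kfib k (k+1) = 2 := by
  have h := kfib_step (by omega : 2 ≤ k) (le_rfl : k ≤ k)
  rw [kfib_k (by omega), Nat.sub_self, kfib_zero k 0 (by omega) (by omega)] at h
  linarith

lemma kfib_k2 {k : ℕ} (hk : 3 ≤ k) : kfib k (k+2) = 4 := by
  have h := kfib_step (by omega : 2 ≤ k) (by omega : k ≤ k + 1)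
  rw [kfib_k1 hk, show k + 1 - k = 1 by omega, kfib_zero k 1 (by omega) (by omega),
    show k + 1 + 1 = k + 2 by omega] at h
  linarith

lemma kfib_upper {k : ℕ} (hk : 3 ≤ k) : ∀ d, kfib k (k + d) ≤ 2 ^ d := by
  intro d
  induction d with
  | zero => simp [kfib_k (by omega : 2 ≤ k)]
  | succ d ih =>
    have h := kfib_step (by omega : 2 ≤ k) (by omega : k ≤ k + d)
    rw [show k + d - k = d by omega] at h
    have h0 := kfib_nonneg k d
    calc kfib k (k + (d+1)) = kfib k (k + d + 1) := by ring_nf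
      _ ≤ 2 * kfib k (k + d) := by linarith
      _ ≤ 2 * 2 ^ d := by linarith
      _ = 2 ^ (d + 1) := by ring

lemma kfib_lower {k : ℕ} (hk : 3 ≤ k) : ∀ d, (7:ℤ) ^ d ≤ 4 ^ d * kfib k (k + d) := by
  intro d
  induction d using Nat.strong_induction_on with
  | _ d ih =>
    match d with
    | 0 => simp [kfib_k (by omega : 2 ≤ k)]
    | 1 => rw [kfib_k1 hk]; norm_num
    | 2 => rw [kfib_k2 hk]; norm_num
    | (e+3) =>
      have h0 := ih e (by omega)
      have h1 := ih (e+1) (by omega)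
      have h2 := ih (e+2) (by omega)
      have hrec : kfib k (k + (e+3)) = ∑ i ∈ Finset.range k, kfib k (k + (e+3) - 1 - i) :=
        kfib_rec (by omega) (by omega)
      have hsub : ({0, 1, 2} : Finset ℕ) ⊆ Finset.range k := by
        intro i hi
        simp only [Finset.mem_insert, Finset.mem_singleton] at hi
        simp only [Finset.mem_range]
        omega
      have h3 : ∑ i ∈ ({0, 1, 2} : Finset ℕ), kfib k (k + (e+3) - 1 - i)
          ≤ ∑ i ∈ Finset.range k, kfib k (k + (e+3) - 1 - i) :=
        Finset.sum_le_sum_of_subset_of_nonneg hsub fun i _ _ => kfib_nonneg k _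
      have hsum : ∑ i ∈ ({0, 1, 2} : Finset ℕ), kfib k (k + (e+3) - 1 - i)
          = kfib k (k + (e+2)) + kfib k (k + (e+1)) + kfib k (k + e) := by
        rw [show ({0, 1, 2} : Finset ℕ) = insert 0 (insert 1 {2}) from rfl]
        rw [Finset.sum_insert (by decide), Finset.sum_insert (by decide),
          Finset.sum_singleton]
        rw [show k + (e+3) - 1 - 0 = k + (e+2) by omega,
          show k + (e+3) - 1 - 1 = k + (e+1) by omega,
          show k + (e+3) - 1 - 2 = k + e by omega]
        ring
      have hge : kfib k (k + (e+2)) + kfib k (k + (e+1)) + kfib k (k + e)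
          ≤ kfib k (k + (e+3)) := by rw [hrec]; rw [← hsum]; exact h3
      have p4 : (0:ℤ) ≤ 4 ^ e := by positivity
      have e7 : (7:ℤ) ^ (e+3) = 343 * 7 ^ e := by ring
      have e72 : (7:ℤ) ^ (e+2) = 49 * 7 ^ e := by ring
      have e71 : (7:ℤ) ^ (e+1) = 7 * 7 ^ e := by ring
      have e4 : (4:ℤ) ^ (e+3) = 64 * 4 ^ e := by ring
      have e42 : (4:ℤ) ^ (e+2) = 16 * 4 ^ e := by ring
      have e41 : (4:ℤ) ^ (e+1) = 4 * 4 ^ e := by ring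
      rw [e7, e4]
      rw [e72, e42] at h2
      rw [e71, e41] at h1
      have hmul := mul_le_mul_of_nonneg_left hge (by positivity : (0:ℤ) ≤ 64 * 4 ^ e)
      have p7 : (0:ℤ) ≤ 7 ^ e := by positivity
      nlinarith [h0, h1, h2, hmul, p4, p7]

lemma pell_two (n : ℕ) : pell (n + 2) = 2 * pell (n + 1) + pell n := rfl

lemma pell_lb : ∀ t, 2 * 12 ^ t ≤ 5 ^ t * pell (t + 2) := by
  intro t
  induction t using Nat.strong_induction_on with
  | _ t ih =>
    match t with
    | 0 => norm_num [pell_two, pell]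
    | 1 => norm_num [pell_two, pell]
    | (t+2) =>
      have h1 := ih (t+1) (by omega)
      have h2 := ih t (by omega)
      have e : pell (t + 2 + 2) = 2 * pell (t + 1 + 2) + pell (t + 2) := pell_two (t+2)
      rw [e]
      have e1 : (12:ℤ) ^ (t+2) = 144 * 12 ^ t := by ring
      have e2 : (5:ℤ) ^ (t+2) = 25 * 5 ^ t := by ring
      have e3 : (5:ℤ) ^ (t+1) = 5 * 5 ^ t := by ring
      have e4 : (12:ℤ) ^ (t+1) = 12 * 12 ^ t := by ring
      rw [e1, e2]
      rw [e3, e4] at h1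
      have h12 : (0:ℤ) ≤ 12 ^ t := by positivity
      ring_nf at h1 h2 ⊢
      nlinarith [h1, h2, h12]

lemma pell_ub : ∀ t, 2 ^ t * pell (t + 1) ≤ 5 ^ t := by
  intro t
  induction t using Nat.strong_induction_on with
  | _ t ih =>
    match t with
    | 0 => norm_num [pell]
    | 1 => norm_num [pell_two, pell]
    | (t+2) =>
      have h1 := ih (t+1) (by omega)
      have h2 := ih t (by omega)
      have e : pell (t + 2 + 1) = 2 * pell (t + 1 + 1) + pell (t + 1) := pell_two (t+1)
      rw [e]
      have e1 : (2:ℤ) ^ (t+2) = 4 * 2 ^ t := by ring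
      have e2 : (5:ℤ) ^ (t+2) = 25 * 5 ^ t := by ring
      have e3 : (2:ℤ) ^ (t+1) = 2 * 2 ^ t := by ring
      have e4 : (5:ℤ) ^ (t+1) = 5 * 5 ^ t := by ring
      rw [e1, e2]
      rw [e3, e4] at h1
      have hp : (0:ℤ) ≤ 5 ^ t := by positivity
      ring_nf at h1 h2 ⊢
      nlinarith [h1, h2, hp]

lemma K1 : ∀ t : ℕ, 2 ^ (29 + 8 * t) * 5 ^ (11 + 2 * t) < 7 ^ (20 + 5 * t) := by
  intro t
  induction t with
  | zero => norm_num
  | succ t ih =>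
    have e1 : (2:ℕ) ^ (29 + 8 * (t+1)) * 5 ^ (11 + 2 * (t+1))
        = 6400 * (2 ^ (29 + 8 * t) * 5 ^ (11 + 2 * t)) := by ring
    have e2 : (7:ℕ) ^ (20 + 5 * (t+1)) = 16807 * 7 ^ (20 + 5 * t) := by ring
    rw [e1, e2]
    calc 6400 * (2 ^ (29 + 8 * t) * 5 ^ (11 + 2 * t)) < 6400 * 7 ^ (20 + 5 * t) := by
          exact mul_lt_mul_of_pos_left ih (by norm_num)
      _ ≤ 16807 * 7 ^ (20 + 5 * t) := mul_le_mul_of_nonneg_right (by norm_num) (Nat.zero_le _)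

lemma K2 : ∀ t : ℕ, 2 ^ (30 + 10 * t) * 5 ^ (52 + 9 * t) < 12 ^ (52 + 9 * t) := by
  intro t
  induction t with
  | zero => norm_num
  | succ t ih =>
    have e1 : (2:ℕ) ^ (30 + 10 * (t+1)) * 5 ^ (52 + 9 * (t+1))
        = 2000000000 * (2 ^ (30 + 10 * t) * 5 ^ (52 + 9 * t)) := by ring
    have e2 : (12:ℕ) ^ (52 + 9 * (t+1)) = 5159780352 * 12 ^ (52 + 9 * t) := by ring
    rw [e1, e2]
    calc 2000000000 * (2 ^ (30 + 10 * t) * 5 ^ (52 + 9 * t))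
        < 2000000000 * 12 ^ (52 + 9 * t) := by exact mul_lt_mul_of_pos_left ih (by norm_num)
      _ ≤ 5159780352 * 12 ^ (52 + 9 * t) := mul_le_mul_of_nonneg_right (by norm_num) (Nat.zero_le _)

/-- If positive integers `(n, m, k, ℓ)` satisfy `F⁽ᵏ⁾_n · F⁽ᵏ⁾_m = P_ℓ` with `k ≥ 3`,
`n > m ≥ 3` and `n ≥ k + 2`, then `2(n + m)/5 < ℓ < 9(n + m)/10`. -/
theorem ell_between (n m k ℓ : ℕ) (hk : 3 ≤ k) (hm : 3 ≤ m) (hmn : m < n)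
    (hn : k + 2 ≤ n) (hℓ : 0 < ℓ)
    (heq : kfib k (n + k - 2) * kfib k (m + k - 2) = pell ℓ) :
    (2 * (n + m) : ℝ) / 5 < (ℓ : ℝ) ∧ (ℓ : ℝ) < (9 * (n + m) : ℝ) / 10 := by
  have hia : n + k - 2 = k + (n - 2) := by omega
  have hib : m + k - 2 = k + (m - 2) := by omega
  rw [hia, hib] at heq
  have haub := kfib_upper hk (n-2)
  have hbub := kfib_upper hk (m-2)
  have halb := kfib_lower hk (n-2)
  have hblb := kfib_lower hk (m-2)
  have han : 0 ≤ kfib k (k+(n-2)) := kfib_nonneg k _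
  have hbn : 0 ≤ kfib k (k+(m-2)) := kfib_nonneg k _
  have ha2 : 2 ≤ kfib k (k + (n-2)) := by
    by_contra h
    push_neg at h
    have h4 : (4:ℤ)^(n-2) < 7^(n-2) := by
      apply pow_lt_pow_left₀ (by norm_num) (by norm_num)
      omega
    have hle : (4:ℤ)^(n-2) * kfib k (k+(n-2)) ≤ 4^(n-2) * 1 :=
      mul_le_mul_of_nonneg_left (by linarith) (by positivity)
    linarith
  have hb2 : 2 ≤ kfib k (k + (m-2)) := by
    by_contra h
    push_neg at h
    have h4 : (4:ℤ)^(m-2) < 7^(m-2) := by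
      apply pow_lt_pow_left₀ (by norm_num) (by norm_num)
      omega
    have hle : (4:ℤ)^(m-2) * kfib k (k+(m-2)) ≤ 4^(m-2) * 1 :=
      mul_le_mul_of_nonneg_left (by linarith) (by positivity)
    linarith
  have hl2 : 2 ≤ ℓ := by
    by_contra h
    push_neg at h
    interval_cases ℓ
    rw [show pell 1 = 1 from rfl] at heq
    nlinarith [ha2, hb2]
  have hpell_ub : pell ℓ ≤ 2 ^ (n + m - 4) := by
    rw [← heq, show n + m - 4 = (n-2) + (m-2) by omega, pow_add]
    exact mul_le_mul haub hbub hbn (by positivity)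
  have hpell_lb : (7:ℤ) ^ (n + m - 4) ≤ 4 ^ (n + m - 4) * pell ℓ := by
    rw [← heq, show n + m - 4 = (n-2) + (m-2) by omega, pow_add, pow_add]
    calc (7:ℤ)^(n-2) * 7^(m-2)
        ≤ (4^(n-2) * kfib k (k+(n-2))) * (4^(m-2) * kfib k (k+(m-2))) :=
          mul_le_mul halb hblb (by positivity) (le_trans (by positivity) halb)
      _ = 4^(n-2) * 4^(m-2) * (kfib k (k+(n-2)) * kfib k (k+(m-2))) := by ring
  -- lower bound for ℓ
  have key1 : (2:ℤ)^(ℓ-1) * 7^(n+m-4) ≤ 2^(2*(n+m)-8) * 5^(ℓ-1) := by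
    have hu := pell_ub (ℓ-1)
    rw [show ℓ - 1 + 1 = ℓ by omega] at hu
    have c1 : (2:ℤ)^(ℓ-1) * 7^(n+m-4) ≤ 2^(ℓ-1) * (4^(n+m-4) * pell ℓ) :=
      mul_le_mul_of_nonneg_left hpell_lb (by positivity)
    have c2 : (2:ℤ)^(ℓ-1) * (4^(n+m-4) * pell ℓ) = 4^(n+m-4) * (2^(ℓ-1) * pell ℓ) := by ring
    have c3 : (4:ℤ)^(n+m-4) * (2^(ℓ-1)*pell ℓ) ≤ 4^(n+m-4) * 5^(ℓ-1) :=
      mul_le_mul_of_nonneg_left hu (by positivity)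
    have c4 : (4:ℤ)^(n+m-4) = 2^(2*(n+m)-8) := by
      rw [show (4:ℤ) = 2^2 by norm_num, ← pow_mul]
      congr 1
      omega
    rw [← c4]
    linarith
  have r1 : ((7:ℝ)/4)^(n+m-4) ≤ ((5:ℝ)/2)^(ℓ-1) := by
    rw [div_pow, div_pow, div_le_div_iff₀ (by positivity) (by positivity)]
    have key1' : (2:ℝ)^(ℓ-1) * 7^(n+m-4) ≤ 2^(2*(n+m)-8) * 5^(ℓ-1) := by exact_mod_cast key1
    have c4 : (4:ℝ)^(n+m-4) = 2^(2*(n+m)-8) := by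
      rw [show (4:ℝ) = 2^2 by norm_num, ← pow_mul]
      congr 1
      omega
    rw [c4]
    linarith
  have r2 : ((5:ℝ)/2)^(2*(n+m)-5) < ((7:ℝ)/4)^(5*(n+m)-20) := by
    have hK := K1 (n + m - 8)
    rw [show 29 + 8*(n+m-8) = 8*(n+m)-35 by omega, show 11 + 2*(n+m-8) = 2*(n+m)-5 by omega,
      show 20 + 5*(n+m-8) = 5*(n+m)-20 by omega] at hK
    rw [div_pow, div_pow, div_lt_div_iff₀ (by positivity) (by positivity)]
    have c4 : (4:ℝ)^(5*(n+m)-20) = 2^(2*(n+m)-5) * 2^(8*(n+m)-35) := by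
      rw [show (4:ℝ) = 2^2 by norm_num, ← pow_mul, ← pow_add]
      congr 1
      omega
    rw [c4]
    have hK' : (2:ℝ)^(8*(n+m)-35) * 5^(2*(n+m)-5) < 7^(5*(n+m)-20) := by exact_mod_cast hK
    have h2p : (0:ℝ) < 2^(2*(n+m)-5) := by positivity
    calc (5:ℝ)^(2*(n+m)-5) * (2^(2*(n+m)-5) * 2^(8*(n+m)-35))
        = (2^(8*(n+m)-35) * 5^(2*(n+m)-5)) * 2^(2*(n+m)-5) := by ring
      _ < 7^(5*(n+m)-20) * 2^(2*(n+m)-5) := mul_lt_mul_of_pos_right hK' h2p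
  have comb : ((5:ℝ)/2)^(2*(n+m)-5) < ((5:ℝ)/2)^((ℓ-1)*5) := by
    calc ((5:ℝ)/2)^(2*(n+m)-5) < ((7:ℝ)/4)^(5*(n+m)-20) := r2
      _ = (((7:ℝ)/4)^(n+m-4))^5 := by rw [← pow_mul]; congr 1; omega
      _ ≤ (((5:ℝ)/2)^(ℓ-1))^5 := pow_le_pow_left₀ (by positivity) r1 5
      _ = ((5:ℝ)/2)^((ℓ-1)*5) := by rw [← pow_mul]
  have hexp1 : 2*(n+m)-5 < (ℓ-1)*5 :=
    (pow_lt_pow_iff_right₀ (by norm_num : (1:ℝ) < 5/2)).1 comb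
  have hlow : 2*(n+m) < 5*ℓ := by omega
  -- upper bound for ℓ
  have key2 : (2:ℤ) * 12^(ℓ-2) ≤ 5^(ℓ-2) * 2^(n+m-4) := by
    have hl := pell_lb (ℓ-2)
    rw [show ℓ - 2 + 2 = ℓ by omega] at hl
    calc (2:ℤ) * 12^(ℓ-2) ≤ 5^(ℓ-2) * pell ℓ := hl
      _ ≤ 5^(ℓ-2) * 2^(n+m-4) := mul_le_mul_of_nonneg_left hpell_ub (by positivity)
  have r3 : ((12:ℝ)/5)^(ℓ-2) ≤ 2^(n+m-5) := by
    rw [div_pow, div_le_iff₀ (by positivity)]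
    have key2' : (2:ℝ) * 12^(ℓ-2) ≤ 5^(ℓ-2) * 2^(n+m-4) := by exact_mod_cast key2
    rw [show (2:ℝ)^(n+m-4) = 2 * 2^(n+m-5) by
      rw [show n+m-4 = (n+m-5)+1 by omega]; ring] at key2'
    ring_nf at key2' ⊢
    linarith
  have r4 : (2:ℝ)^(10*(n+m)-50) < ((12:ℝ)/5)^(9*(n+m)-20) := by
    have hK := K2 (n+m-8)
    rw [show 30+10*(n+m-8) = 10*(n+m)-50 by omega,
      show 52+9*(n+m-8) = 9*(n+m)-20 by omega] at hK
    rw [div_pow, lt_div_iff₀ (by positivity)]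
    have hK' : (2:ℝ)^(10*(n+m)-50) * 5^(9*(n+m)-20) < 12^(9*(n+m)-20) := by exact_mod_cast hK
    linarith
  have comb2 : ((12:ℝ)/5)^((ℓ-2)*10) < ((12:ℝ)/5)^(9*(n+m)-20) := by
    calc ((12:ℝ)/5)^((ℓ-2)*10) = (((12:ℝ)/5)^(ℓ-2))^10 := by rw [← pow_mul]
      _ ≤ ((2:ℝ)^(n+m-5))^10 := pow_le_pow_left₀ (by positivity) r3 10
      _ = 2^(10*(n+m)-50) := by rw [← pow_mul]; congr 1; omega
      _ < _ := r4
  have hexp2 : (ℓ-2)*10 < 9*(n+m)-20 :=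
    (pow_lt_pow_iff_right₀ (by norm_num : (1:ℝ) < 12/5)).1 comb2
  have hhigh : 10*ℓ < 9*(n+m) := by omega
  constructor
  · have h : ((2*(n+m) : ℕ) : ℝ) < ((5*ℓ : ℕ) : ℝ) := by exact_mod_cast hlow
    push_cast at h
    linarith
  · have h : ((10*ℓ : ℕ) : ℝ) < ((9*(n+m) : ℕ) : ℝ) := by exact_mod_cast hhigh
    push_cast at h
    linarith
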